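/- A partition λ belongs to Q₋₁ if and only if its transpose λ† belongs to Q₁, where Q₁ = { λ : λ† ∈ Q₋₁ }; consequently the number of partitions μ ∈ Q₁ with ℓ(μ) ≤ n is 2^n. -/

import Mathlib

/-- A partition, encoded as a weakly decreasing list of positive integers. -/
def IsPartitionL (l : List ℕ) : Prop :=
  l.Pairwise (· ≥ ·) ∧ ∀ x ∈ l, 0 < x

/-- Delete the first row and the first column of a partition. -/
def delRowCol (l : List ℕ) : List ℕ :=
  ((l.tail).map (· - 1)).filter (· ≠ 0)

/-- The set `Q₋₁` of partitions. -/
inductive Qneg : List ℕ → Prop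
  | nil : Qneg []
  | cons {l : List ℕ} (hne : l ≠ []) (hlen : l.length = l.headI + 1)
      (h : Qneg (delRowCol l)) : Qneg l

/-- The transpose (conjugate) of a partition: its `i`-th part (0-indexed) is the
number of parts of `l` that are `≥ i + 1`. -/
def conjP (l : List ℕ) : List ℕ :=
  (List.range l.headI).map fun i => (l.filter fun x => i + 1 ≤ x).length

/-- `Q₁` is the set of partitions whose transpose lies in `Q₋₁`. -/
def Qpos (l : List ℕ) : Prop := Qneg (conjP l)

theorem filt_iff : ∀ (l : List ℕ), l.Pairwise (· ≥ ·) → ∀ (i j : ℕ) (hi : i < l.length),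
    (j ≤ l.get ⟨i, hi⟩ ↔ i + 1 ≤ (l.filter fun x => j ≤ x).length) := by
  intro l hl
  induction l with
  | nil => intro i j hi; simp at hi
  | cons a t ih =>
    have ht : t.Pairwise (· ≥ ·) := hl.of_cons
    have hall : ∀ x ∈ t, x ≤ a := fun x hx => List.rel_of_pairwise_cons hl (a' := x) hx
    intro i j hi
    cases i with
    | zero =>
      simp only [List.get]
      constructor
      · intro h
        have : a ∈ (a :: t).filter fun x => j ≤ x := by
          simp [List.mem_filter, h]
        have := List.length_pos_iff.2 (List.ne_nil_of_mem this)
        omega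
      · intro h
        have : ∃ x ∈ (a :: t).filter fun x => j ≤ x, True := by
          rcases List.exists_mem_of_length_pos (show 0 < (List.filter (fun x => j ≤ x) (a :: t)).length by exact h) with ⟨x, hx⟩
          exact ⟨x, hx, trivial⟩
        rcases this with ⟨x, hx, -⟩
        rw [List.mem_filter] at hx
        have hxa : x ≤ a := by
          rcases List.mem_cons.1 hx.1 with h' | h'
          · omega
          · exact hall x h'
        have := hx.2
        simp at this
        omega
    | succ i =>
      simp only [List.get]
      by_cases hj : j ≤ a
      · rw [List.filter_cons_of_pos (by simpa using hj)]
        simp only [List.length_cons]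
        rw [ih ht i j (by simpa using hi)]
        omega
      · rw [List.filter_cons_of_neg (by simpa using hj)]
        have hh : i < t.length := by simpa using hi
        have h1 : ¬ j ≤ t.get ⟨i, hh⟩ := by
          have hmem : t.get ⟨i, hh⟩ ∈ t := t.get_mem _
          have := hall _ hmem
          omega
        have h2 : (t.filter fun x => j ≤ x) = [] := by
          rw [List.filter_eq_nil_iff]
          intro x hx
          have := hall x hx
          simp only [decide_eq_true_eq]
          omega
        rw [h2]
        simp only [List.length_nil]
        constructor
        · intro h; exact absurd h h1
        · intro h; omega

theorem conjP_length (l : List ℕ) : (conjP l).length = l.headI := by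
  simp [conjP]

theorem conjP_get (l : List ℕ) (i : ℕ) (hi : i < (conjP l).length) :
    (conjP l).get ⟨i, hi⟩ = (l.filter fun x => i + 1 ≤ x).length := by
  simp [conjP]

theorem conjP_sorted (l : List ℕ) : (conjP l).Pairwise (· ≥ ·) := by
  rw [conjP, List.pairwise_map]
  have := List.pairwise_lt_range (n := l.headI)
  refine this.imp ?_
  intro i j hij
  simp only [ge_iff_le]
  rw [← List.countP_eq_length_filter, ← List.countP_eq_length_filter]
  apply List.countP_mono_left
  intro x _ hx
  simp only [decide_eq_true_eq] at *
  omega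

theorem conjP_pos (l : List ℕ) (x : ℕ) (hx : x ∈ conjP l) : 0 < x := by
  rw [conjP, List.mem_map] at hx
  rcases hx with ⟨i, hi, rfl⟩
  rw [List.mem_range] at hi
  have hl : l ≠ [] := by intro h; simp [h] at hi
  have : l.headI ∈ l.filter fun x => i + 1 ≤ x := by
    rw [List.mem_filter]
    refine ⟨?_, by simp; omega⟩
    cases l with
    | nil => simp at hl
    | cons a t => simp
  simpa using List.length_pos_iff.2 (List.ne_nil_of_mem this)

theorem conjP_partition (l : List ℕ) : IsPartitionL (conjP l) :=
  ⟨conjP_sorted l, conjP_pos l⟩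

theorem conjP_headI (l : List ℕ) (hp : IsPartitionL l) (hl : l ≠ []) :
    (conjP l).headI = l.length := by
  have h0 : 0 < l.headI := by
    cases l with
    | nil => simp at hl
    | cons a t => exact hp.2 a (by simp)
  have hlen : 0 < (conjP l).length := by rw [conjP_length]; exact h0
  have hne : conjP l ≠ [] := by
    intro h; rw [h] at hlen; simp at hlen
  have : (conjP l).headI = (conjP l).get ⟨0, hlen⟩ := by
    obtain ⟨a, t, h⟩ := List.exists_cons_of_ne_nil hne
    simp [h]
  rw [this, conjP_get]
  have : (l.filter fun x => 0 + 1 ≤ x) = l := by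
    rw [List.filter_eq_self]
    intro x hx
    have := hp.2 x hx
    simp; omega
  rw [this]

-- L2: filter length determined by index cutoff

theorem filt_len_of_cutoff : ∀ (m : List ℕ) (p : ℕ → Bool) (v : ℕ), v ≤ m.length →
    (∀ (j : ℕ) (hj : j < m.length), (p (m.get ⟨j, hj⟩) = true ↔ j < v)) →
    (m.filter p).length = v := by
  intro m
  induction m with
  | nil => intro p v hv _; simp at hv ⊢; omega
  | cons a t ih =>
    intro p v hv hp
    cases v with
    | zero =>
      have : (a :: t).filter p = [] := by
        rw [List.filter_eq_nil_iff]
        intro x hx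
        rcases List.mem_iff_get.1 hx with ⟨⟨j, hj⟩, rfl⟩
        intro hcon
        have := (hp j hj).1 hcon
        omega
      rw [this]; rfl
    | succ v =>
      have hpa : p a = true := (hp 0 (by simp)).2 (by omega)
      rw [List.filter_cons_of_pos hpa]
      simp only [List.length_cons]
      rw [ih p v (by simpa using hv) ?_]
      intro j hj
      have := hp (j + 1) (by simpa using hj)
      simp only [List.get] at this
      rw [this]
      omega

theorem conjP_conjP (l : List ℕ) (hp : IsPartitionL l) : conjP (conjP l) = l := by
  rcases eq_or_ne l [] with rfl | hl
  · rfl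
  · apply List.ext_get
    · rw [conjP_length, conjP_headI l hp hl]
    · intro i h1 h2
      rw [conjP_get]
      have hv : l.get ⟨i, h2⟩ ≤ (conjP l).length := by
        rw [conjP_length]
        cases l with
        | nil => simp at hl
        | cons a t =>
          rcases List.mem_iff_get.1 (List.get_mem (a :: t) ⟨i, h2⟩) with _
          have : (a :: t).get ⟨i, h2⟩ ∈ a :: t := List.get_mem _ _
          rcases List.mem_cons.1 this with h | h
          · exact le_of_eq h
          · exact le_trans (List.rel_of_pairwise_cons hp.1 (a' := _) h) (by simp)
      apply filt_len_of_cutoff _ _ _ hv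
      intro j hj
      rw [conjP_get]
      simp only [decide_eq_true_eq]
      have := filt_iff l hp.1 i (j + 1) h2
      constructor
      · intro h
        by_contra hcon
        have hji : l.get ⟨i, h2⟩ ≤ j := by omega
        have := this.2 h
        omega
      · intro h
        exact this.1 (by omega)

theorem delRowCol_partition (l : List ℕ) (hp : IsPartitionL l) :
    IsPartitionL (delRowCol l) := by
  constructor
  · have h1 : l.tail.Pairwise (· ≥ ·) := by
      cases l with
      | nil => simp
      | cons a t => exact hp.1.of_cons
    have h2 : (l.tail.map (· - 1)).Pairwise (· ≥ ·) := by
      rw [List.pairwise_map]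
      exact h1.imp (fun h => by omega)
    exact h2.filter _
  · intro x hx
    rw [delRowCol, List.mem_filter] at hx
    have := hx.2
    simp at this
    omega

-- reconstruction of the tail from delRowCol

theorem recon : ∀ (t : List ℕ), t.Pairwise (· ≥ ·) → (∀ x ∈ t, 0 < x) →
    ((((t.map (· - 1)).filter (· ≠ 0)).map (· + 1)) ++
      List.replicate (t.length - ((t.map (· - 1)).filter (· ≠ 0)).length) 1) = t := by
  intro t
  induction t with
  | nil => simp
  | cons a t' ih =>
    intro hs hp
    have ha : 0 < a := hp a (by simp)
    by_cases h1 : a = 1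
    · -- all entries are 1
      have hall : ∀ x ∈ a :: t', x = 1 := by
        intro x hx
        rcases List.mem_cons.1 hx with rfl | hx'
        · exact h1
        · have := List.rel_of_pairwise_cons hs (a' := x) hx'
          have := hp x hx
          omega
      have hf : ((a :: t').map (· - 1)).filter (· ≠ 0) = [] := by
        rw [List.filter_eq_nil_iff]
        intro x hx
        rw [List.mem_map] at hx
        rcases hx with ⟨y, hy, rfl⟩
        have := hall y hy
        simp [this]
      rw [hf]
      simp only [List.map_nil, List.length_nil, Nat.sub_zero, List.nil_append]
      exact (List.eq_replicate_of_mem hall).symm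
    · -- a ≥ 2
      have ha2 : 2 ≤ a := by omega
      have hstep : ((a :: t').map (· - 1)).filter (· ≠ 0) =
          (a - 1) :: ((t'.map (· - 1)).filter (· ≠ 0)) := by
        simp only [List.map_cons]
        rw [List.filter_cons_of_pos (by simp; omega)]
      rw [hstep]
      simp only [List.map_cons, List.length_cons, List.cons_append]
      have hle : ((t'.map (· - 1)).filter (· ≠ 0)).length ≤ t'.length := by
        exact le_trans (List.length_filter_le _ _) (by simp)
      congr 1
      · omega
      · have := ih hs.of_cons (fun x hx => hp x (by simp [hx]))
        have harith : t'.length + 1 - (((t'.map (· - 1)).filter (· ≠ 0)).length + 1)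
            = t'.length - ((t'.map (· - 1)).filter (· ≠ 0)).length := by omega
        rw [harith]
        exact this

def g : List ℕ → List ℕ
  | [] => []
  | k :: s => k :: ((g s).map (· + 1) ++ List.replicate (k - (g s).length) 1)

theorem le_headI_of_sorted {l : List ℕ} (hs : l.Pairwise (· ≥ ·)) {x : ℕ} (hx : x ∈ l) :
    x ≤ l.headI := by
  cases l with
  | nil => simp at hx
  | cons a t =>
    rcases List.mem_cons.1 hx with rfl | hx'
    · simp
    · exact List.rel_of_pairwise_cons hs (a' := x) hx'

theorem g_spec : ∀ (s : List ℕ), s.Pairwise (· > ·) → (∀ x ∈ s, 0 < x) →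
    IsPartitionL (g s) ∧ (g s).headI = s.headI ∧
      (g s).length = (if s = [] then 0 else s.headI + 1) ∧ Qneg (g s) := by
  intro s
  induction s with
  | nil => intro _ _; exact ⟨⟨by simp [g], by simp [g]⟩, by simp [g], by simp [g], Qneg.nil⟩
  | cons k t ih =>
    intro hs hp
    have ht : t.Pairwise (· > ·) := hs.of_cons
    have htp : ∀ x ∈ t, 0 < x := fun x hx => hp x (by simp [hx])
    obtain ⟨⟨hgs, hgp⟩, hgh, hgl, hgq⟩ := ih ht htp
    have hk : 0 < k := hp k (by simp)
    have hlen_le : (g t).length ≤ k := by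
      rcases eq_or_ne t [] with rfl | htne
      · simp [g]
      · rw [hgl, if_neg htne]
        have : t.headI < k := by
          obtain ⟨a, t', rfl⟩ := List.exists_cons_of_ne_nil htne
          have := List.rel_of_pairwise_cons hs (a' := a) (by simp)
          simpa using this
        omega
    have hhead_le : ∀ x ∈ (g t).map (· + 1) ++ List.replicate (k - (g t).length) 1,
        x ≤ k := by
      intro x hx
      rcases List.mem_append.1 hx with hx | hx
      · rw [List.mem_map] at hx
        rcases hx with ⟨y, hy, rfl⟩
        have h1 : y ≤ (g t).headI := le_headI_of_sorted hgs hy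
        rcases eq_or_ne t [] with rfl | htne
        · simp [g] at hy
        · have h2 : t.headI < k := by
            obtain ⟨a, t', rfl⟩ := List.exists_cons_of_ne_nil htne
            have := List.rel_of_pairwise_cons hs (a' := a) (by simp)
            simpa using this
          rw [hgh] at h1
          omega
      · have := List.eq_of_mem_replicate hx
        omega
    have htail_sorted : ((g t).map (· + 1) ++ List.replicate (k - (g t).length) 1).Pairwise (· ≥ ·) := by
      rw [List.pairwise_append]
      refine ⟨?_, ?_, ?_⟩
      · rw [List.pairwise_map]
        exact hgs.imp (fun h => by omega)
      · exact List.pairwise_replicate.2 (Or.inr le_rfl)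
      · intro x hx y hy
        rw [List.mem_map] at hx
        rcases hx with ⟨z, hz, rfl⟩
        have := List.eq_of_mem_replicate hy
        omega
    have htail_pos : ∀ x ∈ (g t).map (· + 1) ++ List.replicate (k - (g t).length) 1, 0 < x := by
      intro x hx
      rcases List.mem_append.1 hx with hx | hx
      · rw [List.mem_map] at hx
        rcases hx with ⟨y, hy, rfl⟩
        omega
      · have := List.eq_of_mem_replicate hx
        omega
    have hdel : delRowCol (g (k :: t)) = g t := by
      show ((((g t).map (· + 1) ++ List.replicate (k - (g t).length) 1).map (· - 1)).filter (· ≠ 0)) = g t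
      rw [List.map_append, List.map_map, List.filter_append]
      have h1 : ((g t).map ((· - 1) ∘ (· + 1))) = g t := by
        have hfun : ((· - 1) ∘ (· + 1) : ℕ → ℕ) = id := by funext x; simp
        rw [hfun, List.map_id]
      have h2 : ((List.replicate (k - (g t).length) 1).map (· - 1)).filter (· ≠ 0) = [] := by
        rw [List.map_replicate]
        simp
      rw [h1, h2, List.append_nil, List.filter_eq_self.2]
      intro x hx
      have := hgp x hx
      simp
      omega
    refine ⟨⟨?_, ?_⟩, ?_, ?_, ?_⟩
    · show (k :: _).Pairwise (· ≥ ·)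
      rw [List.pairwise_cons]
      exact ⟨hhead_le, htail_sorted⟩
    · intro x hx
      rcases List.mem_cons.1 hx with rfl | hx'
      · exact hk
      · exact htail_pos x hx'
    · rfl
    · show (k :: _).length = _
      simp only [List.length_cons, List.length_append, List.length_map,
        List.length_replicate, if_neg (List.cons_ne_nil k t)]
      simp only [List.headI]
      omega
    · refine Qneg.cons (by simp [g]) ?_ ?_
      · show (k :: _).length = (k :: _).headI + 1
        simp only [List.length_cons, List.length_append, List.length_map,
          List.length_replicate, List.headI]
        omega
      · rw [hdel]; exact hgq

theorem delRowCol_length_lt {l : List ℕ} (hl : l ≠ []) :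
    (delRowCol l).length < l.length := by
  have h1 : (delRowCol l).length ≤ (l.tail.map (· - 1)).length := List.length_filter_le _ _
  rw [List.length_map] at h1
  have h2 : l.tail.length < l.length := by
    cases l with
    | nil => simp at hl
    | cons a t => simp
  omega

def arms (l : List ℕ) : List ℕ :=
  if h : l = [] then [] else l.headI :: arms (delRowCol l)
termination_by l.length
decreasing_by exact delRowCol_length_lt h

theorem arms_nil : arms [] = [] := by rw [arms]; simp

theorem arms_cons {l : List ℕ} (h : l ≠ []) :
    arms l = l.headI :: arms (delRowCol l) := by
  rw [arms]; simp [h]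

theorem mem_delRowCol_lt_headI {l : List ℕ} (hp : IsPartitionL l)
    {x : ℕ} (hx : x ∈ delRowCol l) : x < l.headI := by
  rw [delRowCol, List.mem_filter, List.mem_map] at hx
  rcases hx with ⟨⟨y, hy, rfl⟩, hne⟩
  simp only [ne_eq, decide_not, Bool.not_eq_true', decide_eq_false_iff_not] at hne
  have hyl : y ∈ l := List.mem_of_mem_tail hy
  have := le_headI_of_sorted hp.1 hyl
  omega

theorem arms_spec : ∀ (l : List ℕ), Qneg l → IsPartitionL l →
    (arms l).Pairwise (· > ·) ∧ (∀ x ∈ arms l, 0 < x) ∧ (∀ x ∈ arms l, x ≤ l.headI) := by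
  intro l hq
  induction hq with
  | nil => intro _; simp [arms_nil]
  | @cons l hne hlen hdel ih =>
    intro hp
    have hdp : IsPartitionL (delRowCol l) := delRowCol_partition l hp
    obtain ⟨ihs, ihp, ihle⟩ := ih hdp
    have hh : 0 < l.headI := by
      obtain ⟨a, t, rfl⟩ := List.exists_cons_of_ne_nil hne
      exact hp.2 a (by simp)
    have hlt : ∀ x ∈ arms (delRowCol l), x < l.headI := by
      intro x hx
      rcases eq_or_ne (delRowCol l) [] with hd | hd
      · rw [hd, arms_nil] at hx; simp at hx
      · have h1 := ihle x hx
        have h2 : (delRowCol l).headI ∈ delRowCol l := by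
          obtain ⟨a, t, h⟩ := List.exists_cons_of_ne_nil hd
          rw [h]; simp
        have := mem_delRowCol_lt_headI hp h2
        omega
    rw [arms_cons hne]
    refine ⟨?_, ?_, ?_⟩
    · rw [List.pairwise_cons]
      exact ⟨hlt, ihs⟩
    · intro x hx
      rcases List.mem_cons.1 hx with rfl | hx'
      · exact hh
      · exact ihp x hx'
    · intro x hx
      rcases List.mem_cons.1 hx with rfl | hx'
      · exact le_rfl
      · exact le_of_lt (hlt x hx')

theorem g_arms : ∀ (l : List ℕ), Qneg l → IsPartitionL l → g (arms l) = l := by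
  intro l hq
  induction hq with
  | nil => intro _; simp [arms_nil, g]
  | @cons l hne hlen hdel ih =>
    intro hp
    have hdp : IsPartitionL (delRowCol l) := delRowCol_partition l hp
    rw [arms_cons hne]
    show l.headI :: ((g (arms (delRowCol l))).map (· + 1) ++
      List.replicate (l.headI - (g (arms (delRowCol l))).length) 1) = l
    rw [ih hdp]
    obtain ⟨a, t, rfl⟩ := List.exists_cons_of_ne_nil hne
    simp only [List.headI]
    have hts : t.Pairwise (· ≥ ·) := hp.1.of_cons
    have htp : ∀ x ∈ t, 0 < x := fun x hx => hp.2 x (by simp [hx])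
    have hrec := recon t hts htp
    have hdrc : delRowCol (a :: t) = (t.map (· - 1)).filter (· ≠ 0) := rfl
    rw [hdrc]
    have hlt : t.length = a := by
      simp only [List.length_cons, List.headI] at hlen
      omega
    rw [← hlt]
    rw [hrec]

theorem g_del (k : ℕ) (t : List ℕ) (ht : t.Pairwise (· > ·)) (htp : ∀ x ∈ t, 0 < x)
    (hkt : ∀ x ∈ t, x < k) : delRowCol (g (k :: t)) = g t := by
  obtain ⟨⟨hgs, hgp⟩, hgh, hgl, hgq⟩ := g_spec t ht htp
  show ((((g t).map (· + 1) ++ List.replicate (k - (g t).length) 1).map (· - 1)).filter (· ≠ 0)) = g t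
  rw [List.map_append, List.map_map, List.filter_append]
  have h1 : ((g t).map ((· - 1) ∘ (· + 1))) = g t := by
    have hfun : ((· - 1) ∘ (· + 1) : ℕ → ℕ) = id := by funext x; simp
    rw [hfun, List.map_id]
  have h2 : ((List.replicate (k - (g t).length) 1).map (· - 1)).filter (· ≠ 0) = [] := by
    rw [List.map_replicate]
    simp
  rw [h1, h2, List.append_nil, List.filter_eq_self.2]
  intro x hx
  have := hgp x hx
  simp
  omega

theorem arms_g : ∀ (s : List ℕ), s.Pairwise (· > ·) → (∀ x ∈ s, 0 < x) → arms (g s) = s := by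
  intro s
  induction s with
  | nil => intro _ _; simp [g, arms_nil]
  | cons k t ih =>
    intro hs hp
    have ht : t.Pairwise (· > ·) := hs.of_cons
    have htp : ∀ x ∈ t, 0 < x := fun x hx => hp x (by simp [hx])
    have hkt : ∀ x ∈ t, x < k := fun x hx => List.rel_of_pairwise_cons hs (a' := x) hx
    have hgne : g (k :: t) ≠ [] := by simp [g]
    rw [arms_cons hgne, g_del k t ht htp hkt, ih ht htp]
    congr 1

theorem sort_sorted_gt (A : Finset ℕ) : (A.sort (· ≥ ·)).Pairwise (· > ·) := by
  have h1 := Finset.pairwise_sort A (· ≥ ·)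
  have h2 := Finset.sort_nodup A (· ≥ ·)
  exact (h1.and h2).imp (fun ⟨hge, hne⟩ => by omega)

theorem card_T (n : ℕ) :
    {l : List ℕ | IsPartitionL l ∧ Qneg l ∧ l.headI ≤ n}.ncard = 2 ^ n := by
  classical
  have himg : {l : List ℕ | IsPartitionL l ∧ Qneg l ∧ l.headI ≤ n} =
      (fun A : Finset ℕ => g (A.sort (· ≥ ·))) '' ↑((Finset.Icc 1 n).powerset) := by
    ext l
    simp only [Set.mem_setOf_eq, Set.mem_image, Finset.coe_powerset, Set.mem_preimage,
      Set.mem_powerset_iff, Finset.coe_subset, Finset.mem_coe]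
    constructor
    · rintro ⟨hp, hq, hle⟩
      obtain ⟨has, hap, hale⟩ := arms_spec l hq hp
      refine ⟨(arms l).toFinset, ?_, ?_⟩
      · intro x hx
        rw [List.mem_toFinset] at hx
        rw [Finset.mem_Icc]
        exact ⟨hap x hx, le_trans (hale x hx) hle⟩
      · have hnd : (arms l).Nodup := has.imp (fun h => by omega)
        have hsort : Finset.sort (arms l).toFinset (· ≥ ·) = arms l :=
          (List.toFinset_sort (· ≥ ·) hnd).2 (has.imp (fun h => by omega))
        rw [hsort]
        exact g_arms l hq hp
    · rintro ⟨A, hA, rfl⟩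
      set s := A.sort (· ≥ ·) with hs
      have hss : s.Pairwise (· > ·) := sort_sorted_gt A
      have hmem : ∀ x ∈ s, 1 ≤ x ∧ x ≤ n := by
        intro x hx
        have : x ∈ A := (Finset.mem_sort (· ≥ ·)).1 hx
        exact Finset.mem_Icc.1 (hA this)
      have hsp : ∀ x ∈ s, 0 < x := fun x hx => (hmem x hx).1
      obtain ⟨hp, hh, _, hq⟩ := g_spec s hss hsp
      refine ⟨hp, hq, ?_⟩
      rw [hh]
      rcases eq_or_ne s [] with hnil | hne
      · rw [hnil]; exact Nat.zero_le n
      · obtain ⟨a, t, hcons⟩ := List.exists_cons_of_ne_nil hne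
        rw [hcons]
        exact (hmem a (by rw [hcons]; exact List.mem_cons_self)).2
  rw [himg]
  rw [Set.ncard_image_of_injOn ?_]
  · rw [Set.ncard_coe_finset, Finset.card_powerset, Nat.card_Icc]
    norm_num
  · intro A hA B hB hAB
    simp only [Finset.coe_powerset, Set.mem_preimage, Set.mem_powerset_iff,
      Finset.coe_subset, Finset.mem_coe] at hA hB
    have hposA : ∀ x ∈ Finset.sort A (· ≥ ·), 0 < x := by
      intro x hx
      have : x ∈ A := (Finset.mem_sort (· ≥ ·)).1 hx
      exact (Finset.mem_Icc.1 (hA this)).1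
    have hposB : ∀ x ∈ Finset.sort B (· ≥ ·), 0 < x := by
      intro x hx
      have : x ∈ B := (Finset.mem_sort (· ≥ ·)).1 hx
      exact (Finset.mem_Icc.1 (hB this)).1
    have h1 : arms (g (Finset.sort A (· ≥ ·))) = Finset.sort A (· ≥ ·) :=
      arms_g _ (sort_sorted_gt A) hposA
    have h2 : arms (g (Finset.sort B (· ≥ ·))) = Finset.sort B (· ≥ ·) :=
      arms_g _ (sort_sorted_gt B) hposB
    have : Finset.sort A (· ≥ ·) = Finset.sort B (· ≥ ·) := by
      rw [← h1, ← h2]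
      simp only at hAB
      rw [hAB]
    have := congrArg List.toFinset this
    rwa [Finset.sort_toFinset, Finset.sort_toFinset] at this

theorem conjP_headI_le {l : List ℕ} (hp : IsPartitionL l) {n : ℕ} (hn : l.length ≤ n) :
    (conjP l).headI ≤ n := by
  rcases eq_or_ne l [] with rfl | hne
  · show (0 : ℕ) ≤ n; exact Nat.zero_le n
  · rw [conjP_headI l hp hne]; exact hn

/-- A partition `λ` belongs to `Q₋₁` if and only if its transpose `λ†` belongs to
`Q₁ = {λ : λ† ∈ Q₋₁}`; consequently, the number of partitions `μ ∈ Q₁` with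
`ℓ(μ) ≤ n` is `2 ^ n`. -/
theorem qneg_iff_conj_qpos_and_card (n : ℕ) :
    (∀ l : List ℕ, IsPartitionL l → (Qneg l ↔ Qpos (conjP l))) ∧
      {l : List ℕ | IsPartitionL l ∧ Qpos l ∧ l.length ≤ n}.ncard = 2 ^ n := by
  constructor
  · intro l hp
    show Qneg l ↔ Qneg (conjP (conjP l))
    rw [conjP_conjP l hp]
  · have himg : {l : List ℕ | IsPartitionL l ∧ Qpos l ∧ l.length ≤ n} =
        conjP '' {l : List ℕ | IsPartitionL l ∧ Qneg l ∧ l.headI ≤ n} := by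
      ext l
      simp only [Set.mem_setOf_eq, Set.mem_image]
      constructor
      · rintro ⟨hp, hq, hle⟩
        refine ⟨conjP l, ⟨conjP_partition l, hq, conjP_headI_le hp hle⟩, conjP_conjP l hp⟩
      · rintro ⟨m, ⟨hmp, hmq, hmle⟩, rfl⟩
        refine ⟨conjP_partition m, ?_, ?_⟩
        · show Qneg (conjP (conjP m))
          rw [conjP_conjP m hmp]
          exact hmq
        · rw [conjP_length]
          exact hmle
    rw [himg, Set.ncard_image_of_injOn, card_T]
    intro x hx y hy hxy
    rw [Set.mem_setOf_eq] at hx hy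
    have := congrArg conjP hxy
    rwa [conjP_conjP x hx.1, conjP_conjP y hy.1] at this
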